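/- Let u_1, …, u_K be i.i.d. copies of a random variable U with P(U > 1) = 1 and U not almost surely constant. Let c_1, …, c_K and d_1, …, d_K be real constants with c_i d_i > 0 for all i. Define P = Σ_i c_i u_i and Q = Σ_i d_i (1/u_i). Then Cov(P, Q) < 0. -/

import Mathlib

/-!
Bilinearity of the covariance and independence of distinct `u i` reduce `Cov(P, Q)` to
`∑ i, c i * d i * Cov(u i, (u i)⁻¹) = ∑ i, c i * d i * (1 - E[u i] * E[(u i)⁻¹])`, and each
bracket is negative by the strict Jensen inequality for `x ↦ x⁻¹`, since `u i` is not a.s. constant.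
-/

open MeasureTheory ProbabilityTheory Finset

section

variable {Ω : Type*} [MeasurableSpace Ω] {μ : Measure Ω}

lemma memLp_inv_of_ae_le [IsFiniteMeasure μ] {X : Ω → ℝ} {a : ℝ} (p : ENNReal) (ha : 0 < a)
    (hXa : ∀ᵐ ω ∂μ, a ≤ X ω) (hX : AEMeasurable X μ) :
    MemLp (fun ω => (X ω)⁻¹) p μ := by
  refine MemLp.of_bound hX.inv.aestronglyMeasurable a⁻¹ ?_
  filter_upwards [hXa] with ω hω
  rw [Real.norm_of_nonneg (inv_nonneg.2 (ha.le.trans hω))]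
  exact inv_anti₀ ha hω

lemma strictConvexOn_inv_Ici {a : ℝ} (ha : 0 < a) :
    StrictConvexOn ℝ (Set.Ici a) fun x : ℝ => x⁻¹ := by
  simpa using (strictConvexOn_zpow (m := -1) (by norm_num) (by norm_num)).subset
    (Set.Ici_subset_Ioi.2 ha) (convex_Ici a)

/-- The lower bound `a` keeps the range of `X` in a closed set, as Jensen's inequality requires. -/
lemma one_lt_integral_mul_integral_inv [IsProbabilityMeasure μ] {X : Ω → ℝ} {a : ℝ} (ha : 0 < a)
    (hXa : ∀ᵐ ω ∂μ, a ≤ X ω) (hX : Integrable X μ) (hvar : Var[X; μ] ≠ 0) :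
    1 < μ[X] * ∫ ω, (X ω)⁻¹ ∂μ := by
  have hm : 0 < μ[X] :=
    ha.trans_le (by simpa using integral_mono_ae (integrable_const a) hX hXa)
  have hjensen := (strictConvexOn_inv_Ici ha).ae_eq_const_or_map_average_lt
    (continuousOn_inv₀.mono fun x (hx : a ≤ x) => (ha.trans_le hx).ne') isClosed_Ici hXa hX
    (memLp_one_iff_integrable.1 (memLp_inv_of_ae_le 1 ha hXa hX.aemeasurable))
  simp only [average_eq_integral] at hjensen
  rcases hjensen with hconst | hlt
  · exact absurd (by rw [variance, (evariance_eq_zero_iff hX.aemeasurable).2 hconst,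
      ENNReal.toReal_zero]) hvar
  · calc (1 : ℝ) = μ[X] * (μ[X])⁻¹ := (mul_inv_cancel₀ hm.ne').symm
      _ < μ[X] * ∫ ω, (X ω)⁻¹ ∂μ := mul_lt_mul_of_pos_left hlt hm

lemma covariance_self_inv_neg [IsProbabilityMeasure μ] {X : Ω → ℝ} {a : ℝ} (ha : 0 < a)
    (hXa : ∀ᵐ ω ∂μ, a ≤ X ω) (hX : MemLp X 2 μ) (hvar : Var[X; μ] ≠ 0) :
    cov[X, fun ω => (X ω)⁻¹; μ] < 0 := by
  have hself : (X * fun ω => (X ω)⁻¹) =ᵐ[μ] fun _ => 1 := by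
    filter_upwards [hXa] with ω hω
    exact mul_inv_cancel₀ (ha.trans_le hω).ne'
  rw [covariance_eq_sub hX (memLp_inv_of_ae_le 2 ha hXa hX.aemeasurable), integral_congr_ae hself]
  simpa using one_lt_integral_mul_integral_inv ha hXa (hX.integrable one_le_two) hvar

lemma covariance_sum_mul_sum_mul_of_cross_eq_zero {ι : Type*} [Fintype ι] [IsFiniteMeasure μ]
    {X Y : ι → Ω → ℝ} (hX : ∀ i, MemLp (X i) 2 μ) (hY : ∀ i, MemLp (Y i) 2 μ)
    (hXY : ∀ i j, i ≠ j → cov[X i, Y j; μ] = 0) (c d : ι → ℝ) :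
    cov[fun ω => ∑ i, c i * X i ω, fun ω => ∑ j, d j * Y j ω; μ]
      = ∑ i, c i * d i * cov[X i, Y i; μ] := by
  rw [covariance_fun_sum_fun_sum (fun i => (hX i).const_mul (c i))
    (fun j => (hY j).const_mul (d j))]
  refine sum_congr rfl fun i _ => ?_
  rw [sum_eq_single i (fun j _ hji => by
      rw [covariance_const_mul_left, covariance_const_mul_right, hXY i j hji.symm]; ring)
    (by simp), covariance_const_mul_left, covariance_const_mul_right]
  ring

end

theorem cov_neg_of_iid_general
    {Ω : Type*} [MeasurableSpace Ω] (μ : Measure Ω) [IsProbabilityMeasure μ]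
    (K : ℕ) (hK : 0 < K)
    (u : Fin K → Ω → ℝ)
    (h_indep : iIndepFun u μ)
    (h_gt : ∀ i, ∀ᵐ ω ∂μ, 1 < u i ω)
    (h_var : ∀ i, 0 < variance (u i) μ)
    (h_int : ∀ i, Integrable (u i) μ)
    (c d : Fin K → ℝ)
    (hcd : ∀ i, 0 < c i * d i)
    (P Q : Ω → ℝ)
    (hP : P = fun ω => ∑ i, c i * u i ω)
    (hQ : Q = fun ω => ∑ i, d i * (u i ω)⁻¹) :
    (∫ ω, P ω * Q ω ∂μ) - (∫ ω, P ω ∂μ) * ∫ ω, Q ω ∂μ < 0 := by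
  have h_ge : ∀ i, ∀ᵐ ω ∂μ, 1 ≤ u i ω := fun i => (h_gt i).mono fun _ => le_of_lt
  have hL2 : ∀ i, MemLp (u i) 2 μ := fun i =>
    memLp_two_of_variance_ne_zero (h_int i).aestronglyMeasurable (h_var i).ne'
  have hL2_inv : ∀ i, MemLp (fun ω => (u i ω)⁻¹) 2 μ := fun i =>
    memLp_inv_of_ae_le 2 one_pos (h_ge i) (h_int i).aemeasurable
  have h_uncorr : ∀ i j, i ≠ j → cov[u i, fun ω => (u j ω)⁻¹; μ] = 0 := fun i j hij =>
    ((h_indep.indepFun hij).comp measurable_id measurable_inv).covariance_eq_zero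
      (hL2 i) (hL2_inv j)
  have hP_L2 : MemLp P 2 μ := hP ▸ memLp_finsetSum _ fun i _ => (hL2 i).const_mul (c i)
  have hQ_L2 : MemLp Q 2 μ := hQ ▸ memLp_finsetSum _ fun i _ => (hL2_inv i).const_mul (d i)
  calc _ = cov[P, Q; μ] := (covariance_eq_sub hP_L2 hQ_L2).symm
    _ = ∑ i, c i * d i * cov[u i, fun ω => (u i ω)⁻¹; μ] := by
      rw [hP, hQ]
      exact covariance_sum_mul_sum_mul_of_cross_eq_zero hL2 hL2_inv h_uncorr c d
    _ < 0 := sum_neg (fun i _ => mul_neg_of_pos_of_neg (hcd i)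
        (covariance_self_inv_neg one_pos (h_ge i) (hL2 i) (h_var i).ne'))
        (univ_nonempty_iff.2 ⟨⟨0, hK⟩⟩)

/-- If `u 1, …, u K` are i.i.d. copies of a random variable `U` with `P(U > 1) = 1`
and positive variance, and `c i * d i > 0` for all `i`, then with
`P = ∑ i, c i * u i` and `Q = ∑ i, d i / u i`, we have `Cov(P, Q) < 0`. -/
theorem cov_neg_of_iid
    {Ω : Type*} [MeasurableSpace Ω] (μ : Measure Ω) [IsProbabilityMeasure μ]
    (K : ℕ) (hK : 0 < K)
    (u : Fin K → Ω → ℝ)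
    (h_indep : iIndepFun u μ)
    (h_ident : ∀ i j, IdentDistrib (u i) (u j) μ μ)
    (h_meas : ∀ i, Measurable (u i))
    (h_gt : ∀ i, ∀ᵐ ω ∂μ, 1 < u i ω)
    (h_var : ∀ i, 0 < variance (u i) μ)
    (h_int : ∀ i, Integrable (u i) μ)
    (h_int_inv : ∀ i, Integrable (fun ω => (u i ω)⁻¹) μ)
    (h_int_prod : ∀ i j, Integrable (fun ω => u i ω * (u j ω)⁻¹) μ)
    (c d : Fin K → ℝ)
    (hcd : ∀ i, 0 < c i * d i)
    (P Q : Ω → ℝ)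
    (hP : P = fun ω => ∑ i, c i * u i ω)
    (hQ : Q = fun ω => ∑ i, d i * (u i ω)⁻¹) :
    (∫ ω, P ω * Q ω ∂μ) - (∫ ω, P ω ∂μ) * ∫ ω, Q ω ∂μ < 0 :=
  cov_neg_of_iid_general μ K hK u h_indep h_gt h_var h_int c d hcd P Q hP hQ
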